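/- arXiv:1311.0583 — 2 statements merged into one kernel-verified Lean document; each statement's English description precedes it below -/
import Mathlib

section
/- Let k ≥ 1 with r_n(k) < n, and suppose r̂_k ∈ ℂ^N satisfies p_j^H r̂_k = 0 for all 1 ≤ j ≤ k. Then for any complex parameters ω_1, …, ω_{g_n(k+1)}, the ML(n)BiCGStab residual r_k := φ_{g_n(k+1)}(A) r̂_k satisfies q_i^H r_k = 0 for all 1 ≤ i ≤ r_n(k), i.e. r_k ⟂ span{q_1, …, q_{r_n(k)}}. -/
open Matrix Polynomial

/-- The index function `g_n(k) = ⌊(k-1)/n⌋`, rounding toward minus infinity. -/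
def gIdx (n k : ℤ) : ℤ := Int.fdiv (k - 1) n

/-- The index function `r_n(k) = k - n * g_n(k)`. -/
def rIdx (n k : ℤ) : ℤ := k - n * gIdx n k

lemma gIdx_eq (n k : ℤ) (hn : 0 ≤ n) : gIdx n k = (k - 1) / n :=
  Int.fdiv_eq_ediv_of_nonneg _ hn

lemma natDegree_phi_le (ω : ℕ → ℂ) (φ : ℕ → Polynomial ℂ)
    (hφ0 : φ 0 = 1)
    (hφ : ∀ m : ℕ, φ (m + 1) = (1 - C (ω (m + 1)) * X) * φ m) :
    ∀ m : ℕ, (φ m).natDegree ≤ m := by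
  intro m
  induction m with
  | zero => simp [hφ0]
  | succ m ih =>
    rw [hφ m]
    refine le_trans (natDegree_mul_le) ?_
    have h1 : (1 - C (ω (m + 1)) * X).natDegree ≤ 1 := by
      refine le_trans (natDegree_sub_le _ _) ?_
      simp only [natDegree_one, max_le_iff]
      exact ⟨Nat.zero_le _, le_trans (natDegree_C_mul_le _ _) (by simp)⟩
    omega

/-- Let `k ≥ 1` with `r_n(k) < n`, and suppose `r̂_k` satisfies `p_jᴴ r̂_k = 0` for all
`1 ≤ j ≤ k`, where `p_j = (Aᴴ)^{g_n(j)} q_{r_n(j)}`.  Then for any parameters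
`ω_1, …, ω_{g_n(k+1)}`, the ML(n)BiCGStab residual `r_k := φ_{g_n(k+1)}(A) r̂_k`
satisfies `q_iᴴ r_k = 0` for all `1 ≤ i ≤ r_n(k)`, where `φ_0 = 1` and
`φ_m(λ) = (1 − ω_m λ) φ_{m−1}(λ)`. -/
theorem stmt_10 {N : ℕ} (A : Matrix (Fin N) (Fin N) ℂ) (n : ℤ) (hn : 0 < n)
    (q : ℤ → (Fin N → ℂ)) (p : ℤ → (Fin N → ℂ))
    (hp : ∀ k : ℤ, 1 ≤ k → p k = (Aᴴ ^ (gIdx n k).toNat) *ᵥ q (rIdx n k))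
    (ω : ℕ → ℂ) (φ : ℕ → Polynomial ℂ)
    (hφ0 : φ 0 = 1)
    (hφ : ∀ m : ℕ, φ (m + 1) = (1 - C (ω (m + 1)) * X) * φ m)
    (k : ℤ) (hk : 1 ≤ k) (hkn : rIdx n k < n)
    (rhat : Fin N → ℂ)
    (hv : ∀ j : ℤ, 1 ≤ j → j ≤ k → star (p j) ⬝ᵥ rhat = 0) :
    ∀ i : ℤ, 1 ≤ i → i ≤ rIdx n k →
      star (q i) ⬝ᵥ ((aeval A (φ (gIdx n (k + 1)).toNat)) *ᵥ rhat) = 0 := by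
  intro i hi1 hir
  have hn' : (0:ℤ) ≤ n := le_of_lt hn
  set g : ℤ := gIdx n k with hg
  have hgdiv : g = (k - 1) / n := gIdx_eq n k hn'
  have hr : rIdx n k = k - n * g := by rw [rIdx]
  -- division facts
  have hmod : n * ((k-1)/n) + (k-1) % n = k - 1 := Int.mul_ediv_add_emod _ _
  have hmod0 : 0 ≤ (k-1) % n := Int.emod_nonneg _ (ne_of_gt hn)
  have hmodn : (k-1) % n < n := Int.emod_lt_of_pos _ hn
  have hrmod : rIdx n k = (k-1) % n + 1 := by rw [hr, hgdiv]; omega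
  have hgpos : 0 ≤ g := by
    rw [hgdiv]; exact Int.ediv_nonneg (by omega) hn'
  have hrlow : 1 ≤ rIdx n k := by omega
  -- g_n(k+1) = g
  have hg1 : gIdx n (k + 1) = g := by
    rw [gIdx_eq n (k+1) hn', hgdiv]
    have hc : (k-1)/n * n = n * ((k-1)/n) := mul_comm _ _
    have hk1 : k + 1 - 1 = ((k-1) % n + 1) + ((k-1)/n) * n := by omega
    rw [hk1, Int.add_mul_ediv_right _ _ (ne_of_gt hn),
      Int.ediv_eq_zero_of_lt (by omega) (by omega), zero_add]
  -- core: powers vanish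
  have key : ∀ m : ℕ, (m : ℤ) ≤ g → star (q i) ⬝ᵥ ((A ^ m) *ᵥ rhat) = 0 := by
    intro m hm
    set j : ℤ := i + n * m with hj
    have hnm : (0:ℤ) ≤ n * m := by positivity
    have hj1 : 1 ≤ j := by rw [hj]; omega
    have hjk : j ≤ k := by
      have hmul : n * (m:ℤ) ≤ n * g := mul_le_mul_of_nonneg_left hm hn'
      rw [hj]; omega
    have hgj : gIdx n j = m := by
      rw [gIdx_eq n j hn', hj,
        show i + n * (m:ℤ) - 1 = (i - 1) + (m:ℤ) * n by ring,
        Int.add_mul_ediv_right _ _ (ne_of_gt hn),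
        Int.ediv_eq_zero_of_lt (by omega) (by omega), zero_add]
    have hrj : rIdx n j = i := by
      rw [rIdx, hgj, hj]; ring
    have h0 := hv j hj1 hjk
    rw [hp j hj1, hgj, hrj] at h0
    rw [show ((m:ℤ)).toNat = m from rfl] at h0
    rw [star_mulVec, conjTranspose_pow, conjTranspose_conjTranspose] at h0
    rw [dotProduct_mulVec]
    exact h0
  rw [hg1]
  set G : ℕ := g.toNat with hG
  have hdeg : (φ G).natDegree ≤ G := natDegree_phi_le ω φ hφ0 hφ G
  let L : Matrix (Fin N) (Fin N) ℂ →ₗ[ℂ] ℂ :=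
    { toFun := fun M => star (q i) ⬝ᵥ (M *ᵥ rhat)
      map_add' := fun M M' => by simp only [add_mulVec, dotProduct_add]
      map_smul' := fun c M => by
        simp only [smul_mulVec, dotProduct_smul, RingHom.id_apply] }
  show L (aeval A (φ G)) = 0
  rw [Polynomial.aeval_eq_sum_range, map_sum]
  refine Finset.sum_eq_zero ?_
  intro m hm
  simp only [Finset.mem_range] at hm
  have hmg : (m : ℤ) ≤ g := by omega
  show L ((φ G).coeff m • A ^ m) = 0
  rw [L.map_smul]
  have : L (A ^ m) = 0 := key m hmg
  rw [this, smul_zero]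
end

section
/- Let k ≥ 1 with r_n(k) < n, and suppose r̂_k ∈ ℂ^N satisfies p_j^H r̂_k = 0 for all 1 ≤ j ≤ k. Then for any complex parameters ω_1, …, ω_{g_n(k+1)}, the vector r_k := φ_{g_n(k+1)}(A) r̂_k satisfies q_{r_n(k)+1}^H r_k = (Π_{j=1}^{g_n(k+1)} (−ω_j)) · p_{k+1}^H r̂_k. In particular, if ω_j ≠ 0 for all 1 ≤ j ≤ g_n(k+1) and p_{k+1}^H r̂_k ≠ 0, then q_{r_n(k)+1}^H r_k ≠ 0, i.e. r_k is not orthogonal to q_{r_n(k)+1}. -/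
/-!
Write `k = g n + r` with `1 ≤ r < n`, so that `k + 1 = g n + (r + 1)` and
`p_{i n + r + 1} = (Aᴴ)^i q_{r+1}` for every `i ≥ 0`. For `i < g` these indices are at most `k`,
hence `q_{r+1}ᴴ A^i r̂ = 0`. As `φ_g = ∏ (1 - ω_j X)` has degree at most `g`, only its top
coefficient `∏ (-ω_j)` survives in `q_{r+1}ᴴ φ_g(A) r̂`, and it multiplies
`q_{r+1}ᴴ A^g r̂ = p_{k+1}ᴴ r̂`.
-/

open Matrix Polynomial

section IndexArithmetic

variable {n : ℤ}

lemma gIdx_mul_add_rIdx (n k : ℤ) : gIdx n k * n + rIdx n k = k := by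
  unfold rIdx; ring

lemma gIdx_mul_add (hn : 0 < n) (m : ℤ) {s : ℤ} (hs1 : 1 ≤ s) (hsn : s ≤ n) :
    gIdx n (m * n + s) = m := by
  rw [gIdx, Int.fdiv_eq_ediv_of_nonneg _ hn.le, add_sub_assoc, add_comm,
    Int.add_mul_ediv_right _ _ hn.ne', Int.ediv_eq_zero_of_lt (by omega) (by omega), zero_add]

lemma rIdx_mul_add (hn : 0 < n) (m : ℤ) {s : ℤ} (hs1 : 1 ≤ s) (hsn : s ≤ n) :
    rIdx n (m * n + s) = s := by
  rw [rIdx, gIdx_mul_add hn m hs1 hsn]; ring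

lemma gIdx_nonneg (hn : 0 < n) {k : ℤ} (hk : 1 ≤ k) : 0 ≤ gIdx n k := by
  rw [gIdx, Int.fdiv_eq_ediv_of_nonneg _ hn.le]
  exact Int.ediv_nonneg (by omega) hn.le

lemma one_le_rIdx (hn : 0 < n) (k : ℤ) : 1 ≤ rIdx n k := by
  have := Int.emod_add_mul_ediv (k - 1) n
  have := Int.emod_nonneg (k - 1) hn.ne'
  rw [rIdx, gIdx, Int.fdiv_eq_ediv_of_nonneg _ hn.le]
  omega

lemma gIdx_add_one_of_rIdx_lt (hn : 0 < n) {k : ℤ} (hkn : rIdx n k < n) :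
    gIdx n (k + 1) = gIdx n k := by
  conv_lhs => rw [← gIdx_mul_add_rIdx n k, add_assoc]
  exact gIdx_mul_add hn _ (by linarith [one_le_rIdx hn k]) (by omega)

end IndexArithmetic

section ShiftPolynomials

variable {R : Type*} [CommRing R] {ω : ℕ → R} {φ : ℕ → R[X]}

lemma eq_prod_of_succ_eq_mul (hφ0 : φ 0 = 1)
    (hφ : ∀ m : ℕ, φ (m + 1) = (1 - C (ω (m + 1)) * X) * φ m) (m : ℕ) :
    φ m = ∏ j ∈ Finset.Icc 1 m, (1 - C (ω j) * X) := by
  induction m with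
  | zero => simp [hφ0]
  | succ m ih => rw [hφ, ih, Finset.prod_Icc_succ_top (by omega), mul_comm]

lemma natDegree_one_sub_C_mul_X_le (a : R) : (1 - C a * X).natDegree ≤ 1 := by
  compute_degree

lemma natDegree_prod_one_sub_C_mul_X_le (m : ℕ) :
    (∏ j ∈ Finset.Icc 1 m, (1 - C (ω j) * X)).natDegree ≤ m := by
  refine (natDegree_prod_le _ _).trans ?_
  simpa using Finset.sum_le_sum fun j (_ : j ∈ Finset.Icc 1 m) =>
    natDegree_one_sub_C_mul_X_le (ω j)

lemma coeff_prod_one_sub_C_mul_X (m : ℕ) :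
    (∏ j ∈ Finset.Icc 1 m, (1 - C (ω j) * X)).coeff m = ∏ j ∈ Finset.Icc 1 m, (-ω j) := by
  have h := coeff_prod_of_natDegree_le (Finset.Icc 1 m) (fun j => 1 - C (ω j) * X) 1
    fun j _ => natDegree_one_sub_C_mul_X_le (ω j)
  simpa [coeff_one, coeff_C] using h

end ShiftPolynomials

section Krylov

variable {R : Type*} {ι : Type*} [Fintype ι] [DecidableEq ι]

lemma dotProduct_aeval_mulVec_of_forall_lt [CommSemiring R] (A : Matrix ι ι R) {f : R[X]} {m : ℕ}
    (hf : f.natDegree ≤ m) {w v : ι → R} (h : ∀ i < m, w ⬝ᵥ (A ^ i *ᵥ v) = 0) :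
    w ⬝ᵥ (aeval A f *ᵥ v) = f.coeff m * (w ⬝ᵥ (A ^ m *ᵥ v)) := by
  rw [aeval_eq_sum_range' (Nat.lt_succ_of_le hf), sum_mulVec, dotProduct_sum,
    Finset.sum_range_succ, Finset.sum_eq_zero, zero_add, smul_mulVec, dotProduct_smul,
    smul_eq_mul]
  intro i hi
  rw [smul_mulVec, dotProduct_smul, h i (Finset.mem_range.mp hi), smul_zero]

lemma star_conjTranspose_pow_mulVec_dotProduct [Semiring R] [StarRing R] (A : Matrix ι ι R)
    (i : ℕ) (u v : ι → R) : star (Aᴴ ^ i *ᵥ u) ⬝ᵥ v = star u ⬝ᵥ (A ^ i *ᵥ v) := by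
  rw [star_mulVec, ← dotProduct_mulVec, conjTranspose_pow, conjTranspose_conjTranspose]

lemma eq_conjTranspose_pow_mulVec_of_mul_add [Semiring R] [StarRing R] {A : Matrix ι ι R}
    {n : ℤ} (hn : 0 < n) {q p : ℤ → (ι → R)}
    (hp : ∀ k : ℤ, 1 ≤ k → p k = (Aᴴ ^ (gIdx n k).toNat) *ᵥ q (rIdx n k))
    (m : ℕ) {s : ℤ} (hs1 : 1 ≤ s) (hsn : s ≤ n) : p (m * n + s) = Aᴴ ^ m *ᵥ q s := by
  have hm : (0 : ℤ) ≤ m * n := by positivity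
  rw [hp _ (by omega), gIdx_mul_add hn _ hs1 hsn, rIdx_mul_add hn _ hs1 hsn, Int.toNat_natCast]

end Krylov

/-- Let `k ≥ 1` with `r_n(k) < n`, and suppose `r̂_k` satisfies `p_jᴴ r̂_k = 0` for all
`1 ≤ j ≤ k`, where `p_j = (Aᴴ)^{g_n(j)} q_{r_n(j)}`.  Then for any parameters
`ω_1, …, ω_{g_n(k+1)}`, the vector `r_k := φ_{g_n(k+1)}(A) r̂_k` satisfies
`q_{r_n(k)+1}ᴴ r_k = (Π_{j=1}^{g_n(k+1)} (−ω_j)) · p_{k+1}ᴴ r̂_k`.  In particular, if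
`ω_j ≠ 0` for all `1 ≤ j ≤ g_n(k+1)` and `p_{k+1}ᴴ r̂_k ≠ 0`, then
`q_{r_n(k)+1}ᴴ r_k ≠ 0`. -/
theorem stmt_11 {N : ℕ} (A : Matrix (Fin N) (Fin N) ℂ) (n : ℤ) (hn : 0 < n)
    (q : ℤ → (Fin N → ℂ)) (p : ℤ → (Fin N → ℂ))
    (hp : ∀ k : ℤ, 1 ≤ k → p k = (Aᴴ ^ (gIdx n k).toNat) *ᵥ q (rIdx n k))
    (ω : ℕ → ℂ) (φ : ℕ → Polynomial ℂ)
    (hφ0 : φ 0 = 1)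
    (hφ : ∀ m : ℕ, φ (m + 1) = (1 - C (ω (m + 1)) * X) * φ m)
    (k : ℤ) (hk : 1 ≤ k) (hkn : rIdx n k < n)
    (rhat : Fin N → ℂ)
    (hv : ∀ j : ℤ, 1 ≤ j → j ≤ k → star (p j) ⬝ᵥ rhat = 0) :
    star (q (rIdx n k + 1)) ⬝ᵥ ((aeval A (φ (gIdx n (k + 1)).toNat)) *ᵥ rhat) =
      (∏ j ∈ Finset.Icc 1 (gIdx n (k + 1)).toNat, (-(ω j))) *
        (star (p (k + 1)) ⬝ᵥ rhat) ∧
    ((∀ j : ℕ, 1 ≤ j → j ≤ (gIdx n (k + 1)).toNat → ω j ≠ 0) →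
      star (p (k + 1)) ⬝ᵥ rhat ≠ 0 →
      star (q (rIdx n k + 1)) ⬝ᵥ ((aeval A (φ (gIdx n (k + 1)).toNat)) *ᵥ rhat) ≠ 0) := by
  obtain ⟨g, hg⟩ : ∃ g : ℕ, (g : ℤ) = gIdx n k := ⟨_, Int.toNat_of_nonneg (gIdx_nonneg hn hk)⟩
  have hk_succ : k + 1 = g * n + (rIdx n k + 1) := by rw [hg, ← add_assoc, gIdx_mul_add_rIdx]
  have hr1 := one_le_rIdx hn k
  have hp_shift (m : ℕ) : p (m * n + (rIdx n k + 1)) = Aᴴ ^ m *ᵥ q (rIdx n k + 1) :=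
    eq_conjTranspose_pow_mulVec_of_mul_add hn hp m (by omega) (by omega)
  have horth (i : ℕ) (hi : i < g) : star (q (rIdx n k + 1)) ⬝ᵥ (A ^ i *ᵥ rhat) = 0 := by
    have hin_nonneg : (0 : ℤ) ≤ i * n := by positivity
    have hin_lt : ((i : ℤ) + 1) * n ≤ g * n := by gcongr; omega
    rw [← star_conjTranspose_pow_mulVec_dotProduct, ← hp_shift]
    exact hv _ (by omega) (by linarith)
  have hkey : star (q (rIdx n k + 1)) ⬝ᵥ (aeval A (φ g) *ᵥ rhat) =
      (∏ j ∈ Finset.Icc 1 g, (-ω j)) * (star (p (k + 1)) ⬝ᵥ rhat) := by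
    rw [eq_prod_of_succ_eq_mul hφ0 hφ,
      dotProduct_aeval_mulVec_of_forall_lt A (natDegree_prod_one_sub_C_mul_X_le g) horth,
      coeff_prod_one_sub_C_mul_X, hk_succ, hp_shift,
      star_conjTranspose_pow_mulVec_dotProduct]
  rw [gIdx_add_one_of_rIdx_lt hn hkn, ← hg, Int.toNat_natCast]
  refine ⟨hkey, fun hω hne => hkey ▸ mul_ne_zero ?_ hne⟩
  exact Finset.prod_ne_zero_iff.mpr fun j hj =>
    neg_ne_zero.mpr (hω j (Finset.mem_Icc.mp hj).1 (Finset.mem_Icc.mp hj).2)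
end
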